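/- Let $f$ be convex and continuous, $X$ compact, $Z$ a linear subspace, $\rho>0$, and suppose $\omega^*$ is optimal for $\max_{\omega\in Z^\perp}\phi^C(\omega)$ with optimal value $\zeta^{CLD}$. Then $\min_{x\in\operatorname{conv}(X),z\in Z}L_\rho(x,z,\omega^*)=\zeta^{CLD}$, and any minimizer $(x^*,z^*)$ of $L_\rho(\cdot,\cdot,\omega^*)$ over $\operatorname{conv}(X)\times Z$ satisfies $Qx^*=z^*$ and is optimal for $\min\{f(x):Qx=z,\,x\in\operatorname{conv}(X),\,z\in Z\}$. -/

import Mathlib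

/-!
Weak duality gives `L_ρ(x, z, ω*) ≥ f x + ⟪ω*, Q x⟫ ≥ φ^C(ω*) = ζ` on `conv(X) × Z`, so
everything hinges on a minimizer `x̄` of `f + ⟪ω*, Q ·⟫` over `conv(X)` with `Q x̄ ∈ Z`: then
`(x̄, Q x̄)` attains `ζ`, and a minimizer of `L_ρ` has zero penalty, hence is feasible and primal
optimal. If no minimizer were feasible, the projection onto `Zᗮ` of `Q (argmin)` would be a compact
convex set missing `0`, so its point `u ∈ Zᗮ` nearest to `0` satisfies `⟪u, Q x⟫ > 0` on the whole
argmin. By compactness, `φ^C(ω* + t u) > φ^C(ω*)` for small `t > 0`, contradicting the optimality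
of `ω*`.
-/

open RealInnerProductSpace

noncomputable def phiC {n q : ℕ} (f : EuclideanSpace ℝ (Fin n) → ℝ)
    (Q : EuclideanSpace ℝ (Fin n) →ₗ[ℝ] EuclideanSpace ℝ (Fin q))
    (X : Set (EuclideanSpace ℝ (Fin n))) (ω : EuclideanSpace ℝ (Fin q)) : ℝ :=
  sInf {r : ℝ | ∃ x ∈ convexHull ℝ X, r = f x + ⟪ω, Q x⟫}

noncomputable def augL {n q : ℕ} (f : EuclideanSpace ℝ (Fin n) → ℝ)
    (Q : EuclideanSpace ℝ (Fin n) →ₗ[ℝ] EuclideanSpace ℝ (Fin q)) (ρ : ℝ)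
    (x : EuclideanSpace ℝ (Fin n)) (z ω : EuclideanSpace ℝ (Fin q)) : ℝ :=
  f x + ⟪ω, Q x⟫ + ρ / 2 * ‖Q x - z‖ ^ 2

theorem convexHull_eq_image_sum_smul_stdSimplex {E : Type*} [NormedAddCommGroup E]
    [NormedSpace ℝ E] [FiniteDimensional ℝ E] {s : Set E} (hs : s.Nonempty) :
    convexHull ℝ s =
      (fun p : (Fin (Module.finrank ℝ E + 1) → ℝ) × (Fin (Module.finrank ℝ E + 1) → E) =>
        ∑ i, p.1 i • p.2 i) '' (stdSimplex ℝ _ ×ˢ Set.univ.pi fun _ => s) := by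
  obtain ⟨x₀, hx₀⟩ := hs
  refine subset_antisymm (fun x hx => ?_) ?_
  -- Carathéodory: `finrank + 1` affinely independent points suffice; pad with zero weights.
  · obtain ⟨ι, _, z, w, hzs, hz, hw, hw1, rfl⟩ := eq_pos_convex_span_of_mem_convexHull hx
    obtain ⟨e⟩ : Nonempty (ι ↪ Fin (Module.finrank ℝ E + 1)) :=
      Function.Embedding.nonempty_of_card_le <| by
        simpa using hz.card_le_finrank_succ.trans (Nat.succ_le_succ (Submodule.finrank_le _))
    have hw' (i) (hi : i ∉ Set.range e) : Function.extend e w 0 i = 0 := by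
      simp [Function.extend_apply' _ _ _ (fun ⟨j, hj⟩ => hi ⟨j, hj⟩)]
    refine ⟨(Function.extend e w 0, Function.extend e z fun _ => x₀),
      ⟨⟨fun i => ?_, ?_⟩, fun i _ => ?_⟩, ?_⟩
    · by_cases hi : i ∈ Set.range e
      · obtain ⟨j, rfl⟩ := hi
        simpa [e.injective.extend_apply] using (hw j).le
      · simp [hw' i hi]
    · rw [← hw1]
      exact (Fintype.sum_of_injective e e.injective _ _ hw' fun j =>
        (e.injective.extend_apply ..).symm).symm
    · by_cases hi : i ∈ Set.range e
      · obtain ⟨j, rfl⟩ := hi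
        simpa [e.injective.extend_apply] using hzs (Set.mem_range_self j)
      · simpa [Function.extend_apply' _ _ _ (fun ⟨j, hj⟩ => hi ⟨j, hj⟩)] using hx₀
    · refine (Fintype.sum_of_injective e e.injective _ _ (fun i hi => ?_) fun j => ?_).symm
      · simp [hw' i hi]
      · simp [e.injective.extend_apply]
  · rintro _ ⟨⟨w, v⟩, ⟨⟨hw0, hw1⟩, hv⟩, rfl⟩
    exact (convex_convexHull ℝ s).sum_mem (fun i _ => hw0 i) hw1
      fun i _ => subset_convexHull ℝ s (hv i (Set.mem_univ i))

theorem IsCompact.convexHull {E : Type*} [NormedAddCommGroup E]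
    [NormedSpace ℝ E] [FiniteDimensional ℝ E] {s : Set E} (hs : IsCompact s) :
    IsCompact (convexHull ℝ s) := by
  rcases s.eq_empty_or_nonempty with rfl | hne
  · simp
  rw [convexHull_eq_image_sum_smul_stdSimplex hne]
  exact ((isCompact_stdSimplex ℝ _).prod (isCompact_univ_pi fun _ => hs)).image (by fun_prop)

theorem IsCompact.exists_pos_forall_pos_add_mul {X : Type*} [TopologicalSpace X] {K : Set X}
    (hK : IsCompact K) {h ℓ : X → ℝ} (hh : Continuous h) (hℓ : Continuous ℓ)
    (h_nonneg : ∀ x ∈ K, 0 ≤ h x) (hℓ_pos : ∀ x ∈ K, h x ≤ 0 → 0 < ℓ x) :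
    ∃ t > 0, ∀ x ∈ K, 0 < h x + t * ℓ x := by
  set K' := K ∩ {x | ℓ x ≤ 0}
  have hK' : IsCompact K' := hK.inter_right (isClosed_le hℓ continuous_const)
  rcases K'.eq_empty_or_nonempty with hE | hne
  · refine ⟨1, one_pos, fun x hx => ?_⟩
    have : 0 < ℓ x := lt_of_not_ge fun hle => hE.subset ⟨hx, hle⟩
    linarith [h_nonneg x hx]
  obtain ⟨x₀, hx₀, hmin⟩ := hK'.exists_isMinOn hne hh.continuousOn
  obtain ⟨C, hC⟩ := hK'.exists_bound_of_continuousOn hℓ.continuousOn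
  have hC_nonneg : 0 ≤ C := (norm_nonneg _).trans (hC x₀ hx₀)
  have hε : 0 < h x₀ := lt_of_not_ge fun hle => (hℓ_pos x₀ hx₀.1 hle).not_ge hx₀.2
  set t := h x₀ / (C + 1)
  have ht : 0 < t := by positivity
  have htC : t * C < h x₀ := by
    rw [div_mul_eq_mul_div, div_lt_iff₀ (by positivity)]
    nlinarith
  refine ⟨t, ht, fun x hx => ?_⟩
  by_cases hℓx : 0 < ℓ x
  · have := h_nonneg x hx
    positivity
  have hxK' : x ∈ K' := ⟨hx, not_lt.1 hℓx⟩
  have hℓC : -C ≤ ℓ x := (abs_le.1 (hC x hxK')).1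
  nlinarith [isMinOn_iff.1 hmin x hxK', mul_le_mul_of_nonneg_left hℓC ht.le]

theorem Convex.exists_mem_forall_inner_pos {F : Type*} [NormedAddCommGroup F]
    [InnerProductSpace ℝ F] {T : Set F} (hT : Convex ℝ T) (hTc : IsComplete T)
    (hne : T.Nonempty) (h0 : (0 : F) ∉ T) : ∃ u ∈ T, ∀ y ∈ T, 0 < ⟪u, y⟫ := by
  obtain ⟨u, hu, hmin⟩ := exists_norm_eq_iInf_of_complete_convex hne hTc hT 0
  refine ⟨u, hu, fun y hy => ?_⟩
  have hobtuse := (norm_eq_iInf_iff_real_inner_le_zero hT hu).1 hmin y hy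
  have hu0 : 0 < ⟪u, u⟫ := real_inner_self_pos.2 fun h => h0 (h ▸ hu)
  rw [zero_sub, inner_neg_left, inner_sub_right] at hobtuse
  linarith

/-- `hdual` says that `0` maximizes the dual function `u ↦ inf_K (g + ⟪u, Q ·⟫)` over `Zᗮ`. -/
theorem exists_le_and_map_mem_of_dual_optimal {E F : Type*} [AddCommGroup E] [Module ℝ E]
    [TopologicalSpace E] [NormedAddCommGroup F] [InnerProductSpace ℝ F]
    {K : Set E} (hK : IsCompact K) {g : E → ℝ} (hg : ConvexOn ℝ K g) (hgc : Continuous g)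
    {Q : E →ₗ[ℝ] F} (hQ : Continuous Q) {Z : Submodule ℝ F} [Z.HasOrthogonalProjection]
    {ζ : ℝ} (hζ : ∀ x ∈ K, ζ ≤ g x) (hdual : ∀ u ∈ Zᗮ, ∃ x ∈ K, g x + ⟪u, Q x⟫ ≤ ζ) :
    ∃ x ∈ K, g x ≤ ζ ∧ Q x ∈ Z := by
  set S := {x | x ∈ K ∧ g x ≤ ζ}
  have hS : IsCompact S := hK.inter_right (isClosed_le hgc continuous_const)
  have hS_ne : S.Nonempty := by
    obtain ⟨x, hx, hle⟩ := hdual 0 Zᗮ.zero_mem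
    exact ⟨x, hx, by simpa using hle⟩
  by_contra! hZ
  set P := Zᗮ.starProjection
  have hP_mem (y : F) : P y ∈ Zᗮ := Zᗮ.starProjection_apply_mem y
  have h0 : (0 : F) ∉ (P.toLinearMap ∘ₗ Q) '' S := by
    rintro ⟨x, ⟨hxK, hgx⟩, hPx⟩
    refine hZ x hxK hgx ?_
    rw [← Z.orthogonal_orthogonal, ← Submodule.starProjection_apply_eq_zero_iff]
    exact hPx
  obtain ⟨_, ⟨x₀, -, rfl⟩, hsep⟩ := Convex.exists_mem_forall_inner_pos
    ((hg.convex_le ζ).linear_image _) (hS.image (P.continuous.comp hQ)).isComplete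
    (hS_ne.image _) h0
  set u := P (Q x₀)
  have hu_pos : ∀ x ∈ K, g x - ζ ≤ 0 → 0 < ⟪u, Q x⟫ := fun x hxK hgx => by
    have := hsep _ ⟨x, ⟨hxK, by linarith⟩, rfl⟩
    simp only [LinearMap.comp_apply, ContinuousLinearMap.coe_coe] at this
    rwa [← Zᗮ.inner_starProjection_left_eq_right,
      Submodule.starProjection_eq_self_iff.2 (hP_mem _)] at this
  obtain ⟨t, ht, hpos⟩ := hK.exists_pos_forall_pos_add_mul (h := fun x => g x - ζ)
    (hgc.sub continuous_const) (continuous_const.inner hQ) (fun x hx => sub_nonneg.2 (hζ x hx))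
    hu_pos
  obtain ⟨x, hxK, hle⟩ := hdual (t • u) (Zᗮ.smul_mem t (hP_mem _))
  rw [real_inner_smul_left] at hle
  linarith [hpos x hxK]

section Lagrangian

variable {n q : ℕ} {f : EuclideanSpace ℝ (Fin n) → ℝ}
  {Q : EuclideanSpace ℝ (Fin n) →ₗ[ℝ] EuclideanSpace ℝ (Fin q)}
  {X : Set (EuclideanSpace ℝ (Fin n))}

theorem continuous_add_inner_map (hfc : Continuous f) (ω : EuclideanSpace ℝ (Fin q)) :
    Continuous fun x => f x + ⟪ω, Q x⟫ :=
  hfc.add (continuous_const.inner Q.continuous_of_finiteDimensional)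

theorem phiC_eq_sInf_image (ω : EuclideanSpace ℝ (Fin q)) :
    phiC f Q X ω = sInf ((fun x => f x + ⟪ω, Q x⟫) '' convexHull ℝ X) := by
  simp only [phiC, Set.image, eq_comm]

theorem phiC_le (hfc : Continuous f) (hX : IsCompact X) {x : EuclideanSpace ℝ (Fin n)}
    (hx : x ∈ convexHull ℝ X) (ω : EuclideanSpace ℝ (Fin q)) :
    phiC f Q X ω ≤ f x + ⟪ω, Q x⟫ := by
  rw [phiC_eq_sInf_image]
  exact csInf_le (hX.convexHull.image (continuous_add_inner_map hfc ω)).bddBelow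
    (Set.mem_image_of_mem _ hx)

theorem exists_mem_convexHull_phiC_eq (hfc : Continuous f) (hX : IsCompact X)
    (hXne : X.Nonempty) (ω : EuclideanSpace ℝ (Fin q)) :
    ∃ x ∈ convexHull ℝ X, phiC f Q X ω = f x + ⟪ω, Q x⟫ := by
  obtain ⟨x, hx, hmin, -⟩ := hX.convexHull.exists_sInf_image_eq_and_le
    (hXne.mono (subset_convexHull ℝ X)) (continuous_add_inner_map (Q := Q) hfc ω).continuousOn
  exact ⟨x, hx, phiC_eq_sInf_image ω ▸ hmin⟩

theorem exists_map_mem_of_phiC_optimal (hf : ConvexOn ℝ Set.univ f) (hfc : Continuous f)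
    (hX : IsCompact X) (hXne : X.Nonempty) {Z : Submodule ℝ (EuclideanSpace ℝ (Fin q))}
    {ωstar : EuclideanSpace ℝ (Fin q)} (hωs : ωstar ∈ Zᗮ)
    (hopt : ∀ ω ∈ Zᗮ, phiC f Q X ω ≤ phiC f Q X ωstar) :
    ∃ x ∈ convexHull ℝ X, f x + ⟪ωstar, Q x⟫ ≤ phiC f Q X ωstar ∧ Q x ∈ Z := by
  have hK := convex_convexHull ℝ X
  refine exists_le_and_map_mem_of_dual_optimal (g := fun x => f x + ⟪ωstar, Q x⟫) hX.convexHull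
    ((hf.subset (Set.subset_univ _) hK).add ((innerₛₗ ℝ ωstar ∘ₗ Q).convexOn hK))
    (continuous_add_inner_map hfc ωstar) Q.continuous_of_finiteDimensional
    (fun x hx => phiC_le hfc hX hx ωstar) fun u hu => ?_
  obtain ⟨x, hx, hxu⟩ := exists_mem_convexHull_phiC_eq (Q := Q) hfc hX hXne (ωstar + u)
  refine ⟨x, hx, ?_⟩
  rw [add_assoc, ← inner_add_left, ← hxu]
  exact hopt _ (Zᗮ.add_mem hωs hu)

theorem map_eq_of_augL_le {ρ ζ : ℝ} (hρ : 0 < ρ) {x : EuclideanSpace ℝ (Fin n)}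
    {z ω : EuclideanSpace ℝ (Fin q)} (hζ : ζ ≤ f x + ⟪ω, Q x⟫) (hle : augL f Q ρ x z ω ≤ ζ) :
    Q x = z := by
  rw [augL] at hle
  have : ‖Q x - z‖ ^ 2 ≤ 0 := by nlinarith
  rw [← sub_eq_zero, ← norm_eq_zero]
  exact pow_eq_zero_iff two_ne_zero |>.1 (le_antisymm this (sq_nonneg _))

end Lagrangian

theorem stmt2 (n q : ℕ) (f : EuclideanSpace ℝ (Fin n) → ℝ)
    (hf : ConvexOn ℝ Set.univ f) (hfc : Continuous f)
    (Q : EuclideanSpace ℝ (Fin n) →ₗ[ℝ] EuclideanSpace ℝ (Fin q))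
    (X : Set (EuclideanSpace ℝ (Fin n))) (hX : IsCompact X) (hXne : X.Nonempty)
    (Z : Submodule ℝ (EuclideanSpace ℝ (Fin q))) (ρ : ℝ) (hρ : 0 < ρ)
    (ωstar : EuclideanSpace ℝ (Fin q)) (hωs : ωstar ∈ Zᗮ)
    (hopt : ∀ ω ∈ Zᗮ, phiC f Q X ω ≤ phiC f Q X ωstar)
    (ζ : ℝ) (hζ : ζ = phiC f Q X ωstar) :
    sInf {r : ℝ | ∃ x ∈ convexHull ℝ X, ∃ z ∈ Z, r = augL f Q ρ x z ωstar} = ζ ∧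
    ∀ xstar ∈ convexHull ℝ X, ∀ zstar ∈ Z,
      (∀ x ∈ convexHull ℝ X, ∀ z ∈ Z, augL f Q ρ xstar zstar ωstar ≤ augL f Q ρ x z ωstar) →
      Q xstar = zstar ∧
        (∀ x ∈ convexHull ℝ X, ∀ z ∈ Z, Q x = z → f xstar ≤ f x) := by
  have hperp : ∀ z ∈ Z, ⟪ωstar, z⟫ = 0 := fun z hz =>
    Submodule.inner_left_of_mem_orthogonal hz hωs
  have hζ_le : ∀ x ∈ convexHull ℝ X, ζ ≤ f x + ⟪ωstar, Q x⟫ := fun x hx =>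
    hζ ▸ phiC_le hfc hX hx ωstar
  obtain ⟨xb, hxb, hfxb, hQxb⟩ := exists_map_mem_of_phiC_optimal hf hfc hX hXne hωs hopt
  have hlow : ∀ x ∈ convexHull ℝ X, ∀ z, ζ ≤ augL f Q ρ x z ωstar := fun x hx z => by
    rw [augL]
    nlinarith [hζ_le x hx, sq_nonneg ‖Q x - z‖]
  have hxb_val : augL f Q ρ xb (Q xb) ωstar ≤ ζ := by simpa [augL, hζ] using hfxb
  refine ⟨IsLeast.csInf_eq ⟨⟨xb, hxb, Q xb, hQxb, (hxb_val.antisymm (hlow _ hxb _)).symm⟩, ?_⟩, ?_⟩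
  · rintro r ⟨x, hx, z, -, rfl⟩
    exact hlow x hx z
  intro xs hxs zs hzs hxs_min
  have hle : augL f Q ρ xs zs ωstar ≤ ζ := (hxs_min xb hxb (Q xb) hQxb).trans hxb_val
  have hQxs : Q xs = zs := map_eq_of_augL_le hρ (hζ_le xs hxs) hle
  refine ⟨hQxs, fun x hx z hz hQx => ?_⟩
  have hfx := hζ_le x hx
  simp only [augL, hQxs, sub_self, norm_zero, hperp zs hzs] at hle
  rw [hQx, hperp z hz] at hfx
  linarith
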